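/- Let a1, a2, a3 be integers with a3 ≠ 0, and let p be a prime with p > |3*a1| and p > |3*a3|. Then there do not exist integers x, y, z with x+y+z = a1, xy+yz+zx = a2, and xyz = p*a3. -/

import Mathlib

/-!
If `x * y * z = p * a₃` with `p` prime, then `p` divides one of the factors, say `x = p * k`.
Cancelling `p` leaves `k * y * z = a₃ ≠ 0`, so `|y|, |z| ≤ |a₃|` while `|x| ≥ p`. Hence
`p ≤ |x| = |a₁ - y - z| ≤ |a₁| + 2 |a₃| < p/3 + 2p/3 = p`.
-/

lemma Int.abs_le_abs_of_dvd {m n : ℤ} (h : m ∣ n) (hn : n ≠ 0) : |m| ≤ |n| := by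
  simpa only [Int.abs_eq_natAbs, Nat.cast_le] using Int.natAbs_le_of_dvd_ne_zero h hn

lemma not_dvd_of_add_add_eq_of_mul_mul_eq {p a c x y z : ℤ} (hc : c ≠ 0)
    (ha : 3 * |a| < p) (hcp : 3 * |c| < p)
    (hsum : x + y + z = a) (hprod : x * y * z = p * c) : ¬ p ∣ x := by
  rintro ⟨k, rfl⟩
  have hp : 0 < p := by linarith [abs_nonneg a]
  have hcof : k * y * z = c := mul_left_cancel₀ hp.ne' (by rw [← hprod]; ring)
  have hy : |y| ≤ |c| := Int.abs_le_abs_of_dvd ⟨k * z, by rw [← hcof]; ring⟩ hc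
  have hz : |z| ≤ |c| := Int.abs_le_abs_of_dvd ⟨k * y, by rw [← hcof]; ring⟩ hc
  have hk : k ≠ 0 := left_ne_zero_of_mul (left_ne_zero_of_mul (hcof ▸ hc))
  have hx : |p| ≤ |p * k| := Int.abs_le_abs_of_dvd (dvd_mul_right p k) (mul_ne_zero hp.ne' hk)
  have hx' : |p * k| ≤ |a| + |y| + |z| := by
    rw [show p * k = a + -y + -z by linarith, ← abs_neg y, ← abs_neg z]
    exact abs_add_three a (-y) (-z)
  rw [abs_of_pos hp] at hx
  linarith

theorem stmt_10 (a1 a2 a3 : ℤ) (ha3 : a3 ≠ 0) (p : ℕ) (hp : p.Prime)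
    (h1 : (p : ℤ) > |3 * a1|) (h3 : (p : ℤ) > |3 * a3|) :
    ¬ ∃ x y z : ℤ, x + y + z = a1 ∧ x * y + y * z + z * x = a2 ∧ x * y * z = p * a3 := by
  rintro ⟨x, y, z, hsum, -, hprod⟩
  have ha1 : 3 * |a1| < p := by simpa [abs_mul] using h1
  have ha3' : 3 * |a3| < p := by simpa [abs_mul] using h3
  have hpZ : Prime (p : ℤ) := Nat.prime_iff_prime_int.mp hp
  rcases hpZ.dvd_or_dvd ⟨a3, hprod⟩ with hxy | hz
  · rcases hpZ.dvd_or_dvd hxy with hx | hy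
    · exact not_dvd_of_add_add_eq_of_mul_mul_eq ha3 ha1 ha3' hsum hprod hx
    · exact not_dvd_of_add_add_eq_of_mul_mul_eq (y := x) (z := z) ha3 ha1 ha3' (by linarith)
        (by rw [← hprod]; ring) hy
  · exact not_dvd_of_add_add_eq_of_mul_mul_eq (y := x) (z := y) ha3 ha1 ha3' (by linarith)
      (by rw [← hprod]; ring) hz
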